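/- (Laplace approximation for elliptic credible sets.) Let A ⊆ ℝ^q be measurable and f : ℝ^p × A → ℝ measurable with e^f integrable; for each η ∈ A let θ_η ∈ ℝ^p, F_η symmetric positive definite, ◊_η ≥ 0 and Δ_η ≥ 0; fix (θ*, η*), F = F_{η*}, φ_η = f(θ_η, η) − f(θ*, η*), δ_η = (1/2) log det(F_η^{-1} F), and a k × p real matrix Q. For r ≥ 0 write G(r) = (∫_{{v : ‖Q v‖ ≤ r}} e^{-‖F^{1/2} v‖²/2} dv) / (∫_{ℝ^p} e^{-‖F^{1/2} v‖²/2} dv) and G_η(r) = (∫_{{u : ‖Q(θ_η − θ* + u)‖ ≤ r}} e^{-‖F_η^{1/2} u‖²/2} du) / (∫_{ℝ^p} e^{-‖F_η^{1/2} u‖²/2} du). Assume: (i) for every η ∈ A and measurable |h| ≤ 1, | ∫ e^{f(θ_η + u, η) − f(θ_η, η)} h(θ_η + u) du − ∫ e^{-‖F_η^{1/2} u‖²/2} h(θ_η + u) du | ≤ (◊_η + e^{-x}) ∫ e^{-‖F_η^{1/2} u‖²/2} du; (ii) for every η ∈ A, sup_{r ≥ 0} |G_η(r) − G(r)| ≤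 C · Δ_η for a constant C ≥ 0; (iii) the weights e^{φ_η + δ_η} are integrable with positive integral, err_A = (∫_A ◊_η e^{φ_η + δ_η} dη)/(∫_A e^{φ_η + δ_η} dη), Δ_A = (∫_A Δ_η e^{φ_η + δ_η} dη)/(∫_A e^{φ_η + δ_η} dη), and ◊_Q := err_A + C Δ_A satisfies ◊_Q + e^{-x} < 1/2. Then sup_{r ≥ 0} | (∫∫_{{(θ,η) : ‖Q(θ − θ*)‖ ≤ r}} e^{f(θ,η)} dθ dη) / (∫∫_{ℝ^p × A} e^{f(θ,η)} dθ dη) − G(r) | ≤ 2 (◊_Q + e^{-x}) / (1 − ◊_Q − e^{-x}). -/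

import Mathlib

/-!
Fubini writes both the mass of the credible set `{‖Q (θ - θ*)‖ ≤ r} × A` and the total mass as
integrals over `η ∈ A` of conditional masses. For fixed `η`, assumption (i) applied to the
indicator of the translated set compares the conditional mass with `e^{f(θ_η, η)} Z(F_η) G_η(r)`,
where `Z(M) = (2π)^{p/2} det(M)^{-1/2}` is the Gaussian normalizing constant `gaussianMass M`.
Since `Z(F_η) = e^{δ_η} Z(F)`, this is `c e^{φ_η + δ_η} G_η(r)` with `c = e^{f(θ*, η*)} Z(F)`, and
(ii) replaces `G_η(r)` by `G(r)`. Integrating in `η`, the numerator is within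
`c W (◊_Q + e^{-x})` of `c W G(r)` and the denominator within the same distance of `c W`, where
`W = ∫_A e^{φ_η + δ_η}`; the bound on the ratio is then elementary.
-/

open MeasureTheory

/-- The positive semidefinite square root of a matrix (equal to `0` off the
positive semidefinite matrices). -/
noncomputable def matSqrt {n : ℕ} (M : Matrix (Fin n) (Fin n) ℝ) : Matrix (Fin n) (Fin n) ℝ :=
  open scoped Classical in
  if h : M.PosSemidef then
    h.1.eigenvectorUnitary.1 * Matrix.diagonal (((↑) : ℝ → ℝ) ∘ (√·) ∘ h.1.eigenvalues) *
      (star h.1.eigenvectorUnitary : Matrix (Fin n) (Fin n) ℝ)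
  else 0

open Real

lemma integral_comp_linearMap_of_det_ne_zero {E F : Type*} [NormedAddCommGroup E]
    [NormedSpace ℝ E] [MeasurableSpace E] [BorelSpace E] [FiniteDimensional ℝ E]
    [NormedAddCommGroup F] [NormedSpace ℝ F] (μ : Measure E) [μ.IsAddHaarMeasure]
    {f : E →ₗ[ℝ] E} (hf : LinearMap.det f ≠ 0) (g : E → F) :
    ∫ x, g (f x) ∂μ = |LinearMap.det f|⁻¹ • ∫ y, g y ∂μ := by
  have hf_emb : MeasurableEmbedding f :=
    (f.equivOfDetNeZero hf).toContinuousLinearEquiv.toHomeomorph.measurableEmbedding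
  rw [← hf_emb.integral_map, Measure.map_linearMap_addHaar_eq_smul_addHaar μ hf,
    integral_smul_measure, ENNReal.toReal_ofReal (abs_nonneg _), abs_inv]

lemma integral_exp_neg_sq_norm_div_two (V : Type*) [NormedAddCommGroup V]
    [InnerProductSpace ℝ V] [FiniteDimensional ℝ V] [MeasurableSpace V] [BorelSpace V] :
    ∫ v : V, exp (-‖v‖ ^ 2 / 2) = (2 * π) ^ (Module.finrank ℝ V / 2 : ℝ) := by
  convert GaussianFourier.integral_rexp_neg_mul_sq_norm (V := V) (b := 1 / 2) (by norm_num) using 3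
  · congr 1; ring
  · field_simp

lemma matSqrt_eq_cfc {n : ℕ} {M : Matrix (Fin n) (Fin n) ℝ} (hM : M.PosSemidef) :
    matSqrt M = hM.1.cfc Real.sqrt := by
  classical
  rw [matSqrt, dif_pos hM, Matrix.IsHermitian.cfc, Unitary.conjStarAlgAut_apply]
  rfl

lemma det_matSqrt {n : ℕ} {M : Matrix (Fin n) (Fin n) ℝ} (hM : M.PosSemidef) :
    (matSqrt M).det = √M.det := by
  classical
  simp only [matSqrt_eq_cfc hM, Matrix.IsHermitian.cfc, Matrix.det_map, Matrix.det_diagonal,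
    Function.comp_apply, hM.isHermitian.det_eq_prod_eigenvalues, RCLike.ofReal_real_eq_id, id,
    Real.sqrt_prod _ fun _ _ ↦ hM.eigenvalues_nonneg _]

noncomputable def gaussianMass {n : ℕ} (M : Matrix (Fin n) (Fin n) ℝ) : ℝ :=
  ∫ u : EuclideanSpace ℝ (Fin n), exp (-‖Matrix.toEuclideanLin (matSqrt M) u‖ ^ 2 / 2)

lemma gaussianMass_eq {n : ℕ} {M : Matrix (Fin n) (Fin n) ℝ} (hM : M.PosDef) :
    gaussianMass M = (2 * π) ^ (n / 2 : ℝ) / √M.det := by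
  have hdet : LinearMap.det (Matrix.toEuclideanLin (matSqrt M)) = √M.det := by
    rw [← det_matSqrt hM.posSemidef]; exact LinearMap.det_toLpLin 2 _
  have hpos : 0 < √M.det := sqrt_pos.2 hM.det_pos
  rw [gaussianMass, integral_comp_linearMap_of_det_ne_zero volume (hdet ▸ hpos.ne')
    (fun v => exp (-‖v‖ ^ 2 / 2)), integral_exp_neg_sq_norm_div_two, hdet,
    abs_of_pos hpos, finrank_euclideanSpace_fin, smul_eq_mul, inv_mul_eq_div]

lemma gaussianMass_pos {n : ℕ} {M : Matrix (Fin n) (Fin n) ℝ} (hM : M.PosDef) :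
    0 < gaussianMass M := by
  have := hM.det_pos
  rw [gaussianMass_eq hM]; positivity

lemma exp_half_log_det_inv_mul_mul_gaussianMass {n : ℕ} {M M' : Matrix (Fin n) (Fin n) ℝ}
    (hM : M.PosDef) (hM' : M'.PosDef) :
    exp (1 / 2 * log (M⁻¹ * M').det) * gaussianMass M' = gaussianMass M := by
  have h := hM.det_pos
  have h' := hM'.det_pos
  rw [Matrix.det_mul, Matrix.det_nonsing_inv, Ring.inverse_eq_inv', mul_comm (1 / 2 : ℝ),
    ← rpow_def_of_pos (by positivity), ← sqrt_eq_rpow, sqrt_mul (by positivity), sqrt_inv,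
    gaussianMass_eq hM, gaussianMass_eq hM']
  field_simp

section Translation

variable {G : Type*} [AddGroup G] [MeasurableSpace G] [MeasurableAdd G] {μ : Measure G}

lemma integral_mul_indicator_const_add (g : G → ℝ) (a : G) {s : Set G} (hs : MeasurableSet s) :
    ∫ u, g u * s.indicator 1 (a + u) ∂μ = ∫ u in (a + ·) ⁻¹' s, g u ∂μ := by
  rw [← integral_indicator (hs.preimage (measurable_const_add a))]
  congr 1 with u
  by_cases hu : a + u ∈ s <;> simp [hu]

lemma exp_mul_integral_exp_sub_mul_indicator [μ.IsAddLeftInvariant] (ℓ : G → ℝ) (a : G) {s : Set G}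
    (hs : MeasurableSet s) :
    exp (ℓ a) * ∫ u, exp (ℓ (a + u) - ℓ a) * s.indicator 1 (a + u) ∂μ =
      ∫ θ in s, exp (ℓ θ) ∂μ := by
  rw [← integral_const_mul, ← integral_indicator hs,
    ← integral_add_left_eq_self (fun θ => s.indicator (fun θ => exp (ℓ θ)) θ) a]
  congr 1 with u
  by_cases hu : a + u ∈ s <;> simp [hu, exp_sub, mul_div_cancel₀ _ (exp_pos _).ne']

lemma abs_setIntegral_exp_sub_le [μ.IsAddLeftInvariant] {ℓ g : G → ℝ} {a : G} {s : Set G}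
    (hs : MeasurableSet s) {N ε P d : ℝ} (hN : 0 < N)
    (hlap : ∀ h : G → ℝ, Measurable h → (∀ u, |h u| ≤ 1) →
      |(∫ u, exp (ℓ (a + u) - ℓ a) * h (a + u) ∂μ) - ∫ u, g u * h (a + u) ∂μ| ≤ ε * N)
    (hP : |(∫ u in (a + ·) ⁻¹' s, g u ∂μ) / N - P| ≤ d) :
    |(∫ θ in s, exp (ℓ θ) ∂μ) - exp (ℓ a) * N * P| ≤ exp (ℓ a) * N * (ε + d) := by
  have hlap_s := hlap (s.indicator 1) (measurable_const.indicator hs) fun u => by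
    by_cases hu : u ∈ s <;> simp [hu]
  rw [integral_mul_indicator_const_add g a hs] at hlap_s
  rw [← exp_mul_integral_exp_sub_mul_indicator ℓ a hs]
  set I := ∫ u, exp (ℓ (a + u) - ℓ a) * s.indicator 1 (a + u) ∂μ
  set T := ∫ u in (a + ·) ⁻¹' s, g u ∂μ
  have hea : 0 < exp (ℓ a) := exp_pos _
  calc |exp (ℓ a) * I - exp (ℓ a) * N * P|
      = |exp (ℓ a) * (I - T) + exp (ℓ a) * N * (T / N - P)| := by
        congr 1; field_simp; ring
    _ ≤ exp (ℓ a) * |I - T| + exp (ℓ a) * N * |T / N - P| := by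
        grw [abs_add_le, abs_mul, abs_mul, abs_of_pos hea, abs_of_pos (mul_pos hea hN)]
    _ ≤ exp (ℓ a) * (ε * N) + exp (ℓ a) * N * d := by gcongr
    _ = exp (ℓ a) * N * (ε + d) := by ring

end Translation

lemma abs_setIntegral_prod_sub_le {α β : Type*} [MeasurableSpace α] [MeasurableSpace β]
    {μ : Measure α} {ν : Measure β} [SFinite μ] [SFinite ν] {F : α × β → ℝ} {s : Set α}
    {t : Set β} (ht : MeasurableSet t) (hF : IntegrableOn F (s ×ˢ t) (μ.prod ν))
    {v b : β → ℝ} (hv : IntegrableOn v t ν) (hb : IntegrableOn b t ν)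
    (hle : ∀ y ∈ t, |(∫ x in s, F (x, y) ∂μ) - v y| ≤ b y) :
    |(∫ z in s ×ˢ t, F z ∂μ.prod ν) - ∫ y in t, v y ∂ν| ≤ ∫ y in t, b y ∂ν := by
  rw [IntegrableOn, ← Measure.prod_restrict] at hF
  rw [← Measure.prod_restrict, integral_prod_symm _ hF,
    ← integral_sub hF.integral_prod_right hv]
  exact norm_integral_le_of_norm_le hb
    (ae_restrict_of_forall_mem ht fun y hy => (norm_eq_abs _).trans_le (hle y hy))

lemma setIntegral_mul_add_add_mul {β : Type*} [MeasurableSpace β] {μ : Measure β} {t : Set β}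
    {w a b : β → ℝ} (hw : IntegrableOn w t μ) (ha : IntegrableOn (fun y => a y * w y) t μ)
    (hb : IntegrableOn (fun y => b y * w y) t μ) (e C : ℝ) :
    IntegrableOn (fun y => w y * (a y + e + C * b y)) t μ ∧
      ∫ y in t, w y * (a y + e + C * b y) ∂μ =
        (∫ y in t, a y * w y ∂μ) + e * (∫ y in t, w y ∂μ) + C * ∫ y in t, b y * w y ∂μ := by
  have hsplit : (fun y => w y * (a y + e + C * b y)) =
      fun y => a y * w y + e * w y + C * (b y * w y) := by
    funext y; ring
  have hae : IntegrableOn (fun y => a y * w y + e * w y) t μ := ha.add (hw.const_mul e)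
  rw [hsplit, integral_add hae (hb.const_mul C), integral_add ha (hw.const_mul e),
    integral_const_mul, integral_const_mul]
  exact ⟨hae.add (hb.const_mul C), rfl⟩

lemma abs_setIntegral_div_integral_le_one {α : Type*} [MeasurableSpace α] {μ : Measure α}
    {g : α → ℝ} (hg : 0 ≤ g) (s : Set α) :
    |(∫ x in s, g x ∂μ) / ∫ x, g x ∂μ| ≤ 1 := by
  by_cases hint : Integrable g μ
  · rw [abs_of_nonneg (div_nonneg (integral_nonneg hg) (integral_nonneg hg))]
    exact div_le_one_of_le₀ (setIntegral_le_integral hint (.of_forall hg)) (integral_nonneg hg)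
  · simp [integral_undef hint]

lemma abs_div_sub_le_of_abs_sub_le {a b b₀ g ε : ℝ} (hb₀ : 0 < b₀) (hε : ε < 1) (hg : |g| ≤ 1)
    (ha : |a - g * b₀| ≤ b₀ * ε) (hb : |b - b₀| ≤ b₀ * ε) :
    |a / b - g| ≤ 2 * ε / (1 - ε) := by
  have hb_lower : b₀ * (1 - ε) ≤ b := by linarith [(abs_le.1 hb).1]
  have hb_pos : 0 < b := lt_of_lt_of_le (mul_pos hb₀ (by linarith)) hb_lower
  have hnum : |a - g * b| ≤ b₀ * (2 * ε) :=
    calc |a - g * b| = |(a - g * b₀) + g * (b₀ - b)| := by ring_nf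
      _ ≤ |a - g * b₀| + |g| * |b₀ - b| := by rw [← abs_mul]; exact abs_add_le _ _
      _ ≤ b₀ * ε + 1 * (b₀ * ε) := by rw [abs_sub_comm b₀]; gcongr
      _ = b₀ * (2 * ε) := by ring
  calc |a / b - g| = |a - g * b| / b := by
        rw [div_sub' hb_pos.ne', abs_div, abs_of_pos hb_pos, mul_comm]
    _ ≤ b₀ * (2 * ε) / (b₀ * (1 - ε)) := by
        gcongr
        exact (abs_nonneg _).trans hnum
    _ = 2 * ε / (1 - ε) := mul_div_mul_left _ _ hb₀.ne'

theorem laplace_elliptic_credible_sets_general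
    (p q k : ℕ)
    (A : Set (EuclideanSpace ℝ (Fin q))) (hA : MeasurableSet A)
    (f : EuclideanSpace ℝ (Fin p) → EuclideanSpace ℝ (Fin q) → ℝ)
    (θη : EuclideanSpace ℝ (Fin q) → EuclideanSpace ℝ (Fin p))
    (Fη : EuclideanSpace ℝ (Fin q) → Matrix (Fin p) (Fin p) ℝ)
    (dia Δη : EuclideanSpace ℝ (Fin q) → ℝ)
    (θs : EuclideanSpace ℝ (Fin p)) (ηs : EuclideanSpace ℝ (Fin q)) (hηs : ηs ∈ A)
    (x : ℝ) (Q : Matrix (Fin k) (Fin p) ℝ)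
    (hFη : ∀ η ∈ A, (Fη η).PosDef)
    (hΔη : ∀ η ∈ A, 0 ≤ Δη η)
    (hintf : IntegrableOn
      (fun z : EuclideanSpace ℝ (Fin p) × EuclideanSpace ℝ (Fin q) => Real.exp (f z.1 z.2))
      ((Set.univ : Set (EuclideanSpace ℝ (Fin p))) ×ˢ A))
    (φ δ : EuclideanSpace ℝ (Fin q) → ℝ)
    (hφ : ∀ η, φ η = f (θη η) η - f θs ηs)
    (hδ : ∀ η, δ η = (1 / 2) * Real.log ((Fη η)⁻¹ * Fη ηs).det)
    -- the Gaussian credible-set probabilities G(r) and G_η(r)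
    (G : ℝ → ℝ) (Gη : EuclideanSpace ℝ (Fin q) → ℝ → ℝ)
    (hG : ∀ r, G r =
      (∫ v in {v : EuclideanSpace ℝ (Fin p) | ‖Matrix.toEuclideanLin Q v‖ ≤ r},
          Real.exp (-‖Matrix.toEuclideanLin (matSqrt (Fη ηs)) v‖ ^ 2 / 2)) /
        ∫ v, Real.exp (-‖Matrix.toEuclideanLin (matSqrt (Fη ηs)) v‖ ^ 2 / 2))
    (hGη : ∀ η r, Gη η r =
      (∫ u in {u : EuclideanSpace ℝ (Fin p) |
          ‖Matrix.toEuclideanLin Q (θη η - θs + u)‖ ≤ r},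
          Real.exp (-‖Matrix.toEuclideanLin (matSqrt (Fη η)) u‖ ^ 2 / 2)) /
        ∫ u, Real.exp (-‖Matrix.toEuclideanLin (matSqrt (Fη η)) u‖ ^ 2 / 2))
    -- (i) per-η Laplace approximation bound
    (hlap : ∀ η ∈ A, ∀ h : EuclideanSpace ℝ (Fin p) → ℝ, Measurable h → (∀ u, |h u| ≤ 1) →
      |(∫ u, Real.exp (f (θη η + u) η - f (θη η) η) * h (θη η + u)) -
          ∫ u, Real.exp (-‖Matrix.toEuclideanLin (matSqrt (Fη η)) u‖ ^ 2 / 2) * h (θη η + u)|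
        ≤ (dia η + Real.exp (-x)) *
            ∫ u, Real.exp (-‖Matrix.toEuclideanLin (matSqrt (Fη η)) u‖ ^ 2 / 2))
    -- (ii) Gaussian comparison bound
    (C : ℝ) (hC : 0 ≤ C)
    (hcomp : ∀ η ∈ A, ∀ r : ℝ, 0 ≤ r → |Gη η r - G r| ≤ C * Δη η)
    -- (iii) weights, err_A, Δ_A and smallness of ◊_Q
    (hw1 : IntegrableOn (fun η => dia η * Real.exp (φ η + δ η)) A)
    (hw2 : IntegrableOn (fun η => Real.exp (φ η + δ η)) A)
    (hw3 : IntegrableOn (fun η => Δη η * Real.exp (φ η + δ η)) A)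
    (hwpos : 0 < ∫ η in A, Real.exp (φ η + δ η))
    (errA ΔA diaQ : ℝ)
    (herrA : errA =
      (∫ η in A, dia η * Real.exp (φ η + δ η)) / ∫ η in A, Real.exp (φ η + δ η))
    (hΔA : ΔA =
      (∫ η in A, Δη η * Real.exp (φ η + δ η)) / ∫ η in A, Real.exp (φ η + δ η))
    (hdiaQ : diaQ = errA + C * ΔA)
    (hsmall : diaQ + Real.exp (-x) < 1 / 2) :
    ∀ r : ℝ, 0 ≤ r →
      |(∫ z in {z : EuclideanSpace ℝ (Fin p) × EuclideanSpace ℝ (Fin q) |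
            ‖Matrix.toEuclideanLin Q (z.1 - θs)‖ ≤ r ∧ z.2 ∈ A}, Real.exp (f z.1 z.2)) /
          (∫ z in (Set.univ : Set (EuclideanSpace ℝ (Fin p))) ×ˢ A, Real.exp (f z.1 z.2)) -
        G r|
        ≤ 2 * (diaQ + Real.exp (-x)) / (1 - diaQ - Real.exp (-x)) := by
  intro r hr
  set W := ∫ η in A, exp (φ η + δ η)
  set c := exp (f θs ηs) * gaussianMass (Fη ηs)
  have hc : 0 < c := mul_pos (exp_pos _) (gaussianMass_pos (hFη ηs hηs))
  have hweight : ∀ η ∈ A, exp (f (θη η) η) * gaussianMass (Fη η) = c * exp (φ η + δ η) := by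
    intro η hη
    rw [← exp_half_log_det_inv_mul_mul_gaussianMass (hFη η hη) (hFη ηs hηs), ← hδ, hφ,
      exp_add, exp_sub]
    field_simp
    exact mul_comm _ _
  have hbudget := setIntegral_mul_add_add_mul hw2 hw1 hw3 (exp (-x)) C
  have hbudget_eq : ∫ η in A, c * (exp (φ η + δ η) * (dia η + exp (-x) + C * Δη η)) =
      c * W * (diaQ + exp (-x)) := by
    rw [integral_const_mul, hbudget.2, hdiaQ, herrA, hΔA]
    field_simp
    ring
  have hcred : ∀ s, MeasurableSet s → ∀ P : ℝ, (∀ η ∈ A,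
      |(∫ u in (θη η + ·) ⁻¹' s, exp (-‖Matrix.toEuclideanLin (matSqrt (Fη η)) u‖ ^ 2 / 2)) /
        gaussianMass (Fη η) - P| ≤ C * Δη η) →
      |(∫ z in s ×ˢ A, exp (f z.1 z.2)) - P * (c * W)| ≤ c * W * (diaQ + exp (-x)) := by
    intro s hs P hP
    rw [← hbudget_eq, show P * (c * W) = ∫ η in A, c * exp (φ η + δ η) * P by
      rw [integral_mul_const, integral_const_mul]; ring]
    refine abs_setIntegral_prod_sub_le hA
      (hintf.mono_set (Set.prod_mono (Set.subset_univ s) le_rfl))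
      ((hw2.const_mul c).mul_const P) (hbudget.1.const_mul c) fun η hη => ?_
    have hlap_s := abs_setIntegral_exp_sub_le (ℓ := (f · η)) hs (gaussianMass_pos (hFη η hη))
      (hlap η hη) (hP η hη)
    rw [hweight η hη] at hlap_s
    exact hlap_s.trans_eq (mul_assoc _ _ _)
  have hSr : MeasurableSet
      {θ : EuclideanSpace ℝ (Fin p) | ‖Matrix.toEuclideanLin Q (θ - θs)‖ ≤ r} :=
    measurableSet_le (by fun_prop) measurable_const
  have hnum := hcred _ hSr (G r) fun η hη => by
    have hη_comp := hcomp η hη r hr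
    have hpre : (θη η + ·) ⁻¹' {θ | ‖Matrix.toEuclideanLin Q (θ - θs)‖ ≤ r} =
        {u | ‖Matrix.toEuclideanLin Q (θη η - θs + u)‖ ≤ r} := by
      ext u; simp [add_sub_right_comm]
    rw [hGη] at hη_comp
    rw [hpre]
    exact hη_comp
  have hden := hcred _ .univ 1 fun η hη => by
    rw [Set.preimage_univ, Measure.restrict_univ, ← gaussianMass,
      div_self (gaussianMass_pos (hFη η hη)).ne', sub_self, abs_zero]
    exact mul_nonneg hC (hΔη η hη)
  rw [one_mul] at hden
  have hG_le : |G r| ≤ 1 := by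
    rw [hG r]
    exact abs_setIntegral_div_integral_le_one (fun v => (exp_pos _).le) _
  refine (abs_div_sub_le_of_abs_sub_le (mul_pos hc hwpos) (by linarith) hG_le hnum hden).trans_eq
    (by ring)

/-- Laplace approximation for elliptic credible sets. -/
theorem laplace_elliptic_credible_sets
    (p q k : ℕ)
    (A : Set (EuclideanSpace ℝ (Fin q))) (hA : MeasurableSet A)
    (f : EuclideanSpace ℝ (Fin p) → EuclideanSpace ℝ (Fin q) → ℝ)
    (hfm : Measurable (fun z : EuclideanSpace ℝ (Fin p) × EuclideanSpace ℝ (Fin q) =>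
      f z.1 z.2))
    (θη : EuclideanSpace ℝ (Fin q) → EuclideanSpace ℝ (Fin p))
    (Fη : EuclideanSpace ℝ (Fin q) → Matrix (Fin p) (Fin p) ℝ)
    (dia Δη : EuclideanSpace ℝ (Fin q) → ℝ)
    (θs : EuclideanSpace ℝ (Fin p)) (ηs : EuclideanSpace ℝ (Fin q)) (hηs : ηs ∈ A)
    (x : ℝ) (Q : Matrix (Fin k) (Fin p) ℝ)
    (hFη : ∀ η ∈ A, (Fη η).PosDef)
    (hdia : ∀ η ∈ A, 0 ≤ dia η) (hΔη : ∀ η ∈ A, 0 ≤ Δη η)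
    (hintf : IntegrableOn
      (fun z : EuclideanSpace ℝ (Fin p) × EuclideanSpace ℝ (Fin q) => Real.exp (f z.1 z.2))
      ((Set.univ : Set (EuclideanSpace ℝ (Fin p))) ×ˢ A))
    (φ δ : EuclideanSpace ℝ (Fin q) → ℝ)
    (hφ : ∀ η, φ η = f (θη η) η - f θs ηs)
    (hδ : ∀ η, δ η = (1 / 2) * Real.log ((Fη η)⁻¹ * Fη ηs).det)
    -- the Gaussian credible-set probabilities G(r) and G_η(r)
    (G : ℝ → ℝ) (Gη : EuclideanSpace ℝ (Fin q) → ℝ → ℝ)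
    (hG : ∀ r, G r =
      (∫ v in {v : EuclideanSpace ℝ (Fin p) | ‖Matrix.toEuclideanLin Q v‖ ≤ r},
          Real.exp (-‖Matrix.toEuclideanLin (matSqrt (Fη ηs)) v‖ ^ 2 / 2)) /
        ∫ v, Real.exp (-‖Matrix.toEuclideanLin (matSqrt (Fη ηs)) v‖ ^ 2 / 2))
    (hGη : ∀ η r, Gη η r =
      (∫ u in {u : EuclideanSpace ℝ (Fin p) |
          ‖Matrix.toEuclideanLin Q (θη η - θs + u)‖ ≤ r},
          Real.exp (-‖Matrix.toEuclideanLin (matSqrt (Fη η)) u‖ ^ 2 / 2)) /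
        ∫ u, Real.exp (-‖Matrix.toEuclideanLin (matSqrt (Fη η)) u‖ ^ 2 / 2))
    -- (i) per-η Laplace approximation bound
    (hlap : ∀ η ∈ A, ∀ h : EuclideanSpace ℝ (Fin p) → ℝ, Measurable h → (∀ u, |h u| ≤ 1) →
      |(∫ u, Real.exp (f (θη η + u) η - f (θη η) η) * h (θη η + u)) -
          ∫ u, Real.exp (-‖Matrix.toEuclideanLin (matSqrt (Fη η)) u‖ ^ 2 / 2) * h (θη η + u)|
        ≤ (dia η + Real.exp (-x)) *
            ∫ u, Real.exp (-‖Matrix.toEuclideanLin (matSqrt (Fη η)) u‖ ^ 2 / 2))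
    -- (ii) Gaussian comparison bound
    (C : ℝ) (hC : 0 ≤ C)
    (hcomp : ∀ η ∈ A, ∀ r : ℝ, 0 ≤ r → |Gη η r - G r| ≤ C * Δη η)
    -- (iii) weights, err_A, Δ_A and smallness of ◊_Q
    (hw1 : IntegrableOn (fun η => dia η * Real.exp (φ η + δ η)) A)
    (hw2 : IntegrableOn (fun η => Real.exp (φ η + δ η)) A)
    (hw3 : IntegrableOn (fun η => Δη η * Real.exp (φ η + δ η)) A)
    (hwpos : 0 < ∫ η in A, Real.exp (φ η + δ η))
    (errA ΔA diaQ : ℝ)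
    (herrA : errA =
      (∫ η in A, dia η * Real.exp (φ η + δ η)) / ∫ η in A, Real.exp (φ η + δ η))
    (hΔA : ΔA =
      (∫ η in A, Δη η * Real.exp (φ η + δ η)) / ∫ η in A, Real.exp (φ η + δ η))
    (hdiaQ : diaQ = errA + C * ΔA)
    (hsmall : diaQ + Real.exp (-x) < 1 / 2) :
    ∀ r : ℝ, 0 ≤ r →
      |(∫ z in {z : EuclideanSpace ℝ (Fin p) × EuclideanSpace ℝ (Fin q) |
            ‖Matrix.toEuclideanLin Q (z.1 - θs)‖ ≤ r ∧ z.2 ∈ A}, Real.exp (f z.1 z.2)) /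
          (∫ z in (Set.univ : Set (EuclideanSpace ℝ (Fin p))) ×ˢ A, Real.exp (f z.1 z.2)) -
        G r|
        ≤ 2 * (diaQ + Real.exp (-x)) / (1 - diaQ - Real.exp (-x)) :=
  laplace_elliptic_credible_sets_general p q k A hA f θη Fη dia Δη θs ηs hηs x Q hFη hΔη hintf φ δ
    hφ hδ G Gη hG hGη hlap C hC hcomp hw1 hw2 hw3 hwpos errA ΔA diaQ herrA hΔA hdiaQ hsmall
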